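/- arXiv:2209.08653 — 2 statements merged into one kernel-verified Lean document; each statement's English description precedes it below -/
import Mathlib

section
/- In a highest-weight representation of ŝl₂ at level k (with t := k + 2) built over a horizontal representation with Casimir C₂ = t²/2 - t, the operator T̂^c := 2 K_{ab} J^a_{-1} J^b_0 J^c_0 - t f^c_{ab} J^a_{-1} J^b_0 - t² J^c_{-1} applied to any horizontal (primary) state |v⟩ yields a vector annihilated by all J^d_1: J^d_1 T̂^c |v⟩ = 0 for all c, d. -/
/-- Structure constants of sl₂ in the (0,+,-) basis (0 ↔ t⁰, 1 ↔ t⁺, 2 ↔ t⁻):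
[t^a, t^b] = f^{ab}_c t^c with [t⁰,t^±] = ±t^±, [t⁺,t⁻] = 2t⁰. -/
def sl2f (a b c : Fin 3) : ℂ :=
  if a = 0 ∧ b = 1 ∧ c = 1 then 1
  else if a = 1 ∧ b = 0 ∧ c = 1 then -1
  else if a = 0 ∧ b = 2 ∧ c = 2 then -1
  else if a = 2 ∧ b = 0 ∧ c = 2 then 1
  else if a = 1 ∧ b = 2 ∧ c = 0 then 2
  else if a = 2 ∧ b = 1 ∧ c = 0 then -2
  else 0

/-- The (normalized, lowered) Killing form: K_{00} = 2, K_{+-} = K_{-+} = 1. -/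
def sl2K (a b : Fin 3) : ℂ :=
  if a = 0 ∧ b = 0 then 2
  else if a = 1 ∧ b = 2 then 1
  else if a = 2 ∧ b = 1 then 1
  else 0

/-- The inverse (raised) Killing form: K^{00} = 1/2, K^{+-} = K^{-+} = 1. -/
noncomputable def sl2Kinv (a b : Fin 3) : ℂ :=
  if a = 0 ∧ b = 0 then 1/2
  else if a = 1 ∧ b = 2 then 1
  else if a = 2 ∧ b = 1 then 1
  else 0

/-- The lowered structure constants f^c_{ab} = K_{ad} f^{cd}_b. -/
noncomputable def sl2fLow (c a b : Fin 3) : ℂ := ∑ d, sl2K a d * sl2f c d b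

/-- The level-1 null operator
T̂^c = 2 K_{ab} J^a_{-1} J^b_0 J^c_0 - t f^c_{ab} J^a_{-1} J^b_0 - t² J^c_{-1}. -/
noncomputable def nullOp {V : Type*} [AddCommGroup V] [Module ℂ V]
    (J : Fin 3 → ℤ → V →ₗ[ℂ] V) (t : ℂ) (c : Fin 3) : V →ₗ[ℂ] V :=
  (2 : ℂ) • (∑ a, ∑ b, sl2K a b • (J a (-1) ∘ₗ J b 0 ∘ₗ J c 0))
    - t • (∑ a, ∑ b, sl2fLow c a b • (J a (-1) ∘ₗ J b 0))
    - t ^ 2 • J c (-1)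

/-! On a primary state `v`, the mode `J^d_1` commutes past the zero modes and only meets
`J^a_{-1}`, where `[J^d_1, J^a_{-1}] = f^{da}_e J^e_0 + k K^{da}`. What is left is a polynomial
in the zero modes applied to `v`. The sl₂ contraction identities turn the cubic part
`2 K_{ab} f^{da}_e J^e_0 J^b_0 J^c_0` into `4 J^d_0 J^c_0` and the quadratic part
`f^c_{ab} f^{da}_e J^e_0 J^b_0` into `2 J^d_0 J^c_0 + 2 f^{cd}_e J^e_0 - 2 K^{dc} C₂`; with
`C₂ v = (t²/2 - t) v` and `t = k + 2` every coefficient cancels. -/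

theorem sl2f_swap (a b c : Fin 3) : sl2f b a c = -sl2f a b c := by
  fin_cases a <;> fin_cases b <;> fin_cases c <;> simp [sl2f]

theorem sl2Kinv_comm (a b : Fin 3) : sl2Kinv b a = sl2Kinv a b := by
  fin_cases a <;> fin_cases b <;> simp [sl2Kinv]

theorem sum_sl2Kinv_mul_sl2K (d b : Fin 3) :
    ∑ a, sl2Kinv d a * sl2K a b = if d = b then 1 else 0 := by
  fin_cases d <;> fin_cases b <;> simp [sl2Kinv, sl2K]

theorem sum_sl2fLow_mul_sl2Kinv (c d b : Fin 3) :
    ∑ a, sl2fLow c a b * sl2Kinv d a = sl2f c d b := by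
  fin_cases c <;> fin_cases d <;> fin_cases b <;>
    simp [sl2fLow, sl2Kinv, sl2K, sl2f]

-- Lowered form of `f^{ab}_i f^{ic}_d = 2 (K^a_d K^{bc} - K^{ac} K^b_d)`.
theorem sum_sl2fLow_mul_sl2f (c d b e : Fin 3) :
    ∑ a, sl2fLow c a b * sl2f d a e =
      2 * ((if c = e then 1 else 0) * (if d = b then 1 else 0) - sl2Kinv c d * sl2K e b) := by
  fin_cases c <;> fin_cases d <;> fin_cases b <;> fin_cases e <;>
    simp [sl2fLow, sl2Kinv, sl2K, sl2f]

theorem sum_sum_smul_sum_smul {ι M : Type*} [Fintype ι] [AddCommMonoid M] [Module ℂ M]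
    (A B : ι → ι → ℂ) (w : ι → ι → M) :
    ∑ a, ∑ b, A a b • ∑ e, B a e • w e b = ∑ b, ∑ e, (∑ a, A a b * B a e) • w e b := by
  simp only [Finset.smul_sum, smul_smul, Finset.sum_smul]
  rw [Finset.sum_comm]
  refine Finset.sum_congr rfl fun b _ => ?_
  rw [Finset.sum_comm]

theorem sum_sum_sl2K_smul_sl2Kinv_smul {M : Type*} [AddCommMonoid M] [Module ℂ M]
    (k : ℂ) (d : Fin 3) (w : Fin 3 → M) :
    ∑ a, ∑ b, sl2K a b • (k * sl2Kinv d a) • w b = k • w d := by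
  simp only [smul_smul]
  rw [Finset.sum_comm]
  simp [← Finset.sum_smul, mul_left_comm _ k, ← Finset.mul_sum, mul_comm (sl2K _ _),
    sum_sl2Kinv_mul_sl2K]

theorem sum_sum_sl2fLow_smul_sl2Kinv_smul {M : Type*} [AddCommMonoid M] [Module ℂ M]
    (k : ℂ) (c d : Fin 3) (w : Fin 3 → M) :
    ∑ a, ∑ b, sl2fLow c a b • (k * sl2Kinv d a) • w b = k • ∑ b, sl2f c d b • w b := by
  simp only [smul_smul]
  rw [Finset.sum_comm]
  simp [← Finset.sum_smul, mul_left_comm _ k, ← Finset.mul_sum, sum_sl2fLow_mul_sl2Kinv,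
    Finset.smul_sum, smul_smul]

section ZeroModes

variable {V : Type*} [AddCommGroup V] [Module ℂ V] (X : Fin 3 → V →ₗ[ℂ] V)

noncomputable def zeroModeCasimir : V →ₗ[ℂ] V := ∑ a, ∑ b, sl2K a b • X a ∘ₗ X b

theorem zeroModeCasimir_apply (y : V) :
    zeroModeCasimir X y = (2 : ℂ) • X 0 (X 0 y) + X 1 (X 2 y) + X 2 (X 1 y) := by
  simp [zeroModeCasimir, Fin.sum_univ_three, sl2K]

variable {X}

theorem sum_sl2K_smul_sum_sl2f_smul
    (hX : ∀ a b y, X a (X b y) = X b (X a y) + ∑ c, sl2f a b c • X c y) (d : Fin 3) (y : V) :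
    ∑ a, ∑ b, sl2K a b • ∑ e, sl2f d a e • X e (X b y) = (2 : ℂ) • X d y := by
  fin_cases d <;> simp [Fin.sum_univ_three, sl2K, sl2f, hX 1 2 y, hX 0 1 y, hX 0 2 y]

theorem sum_sl2fLow_smul_sum_sl2f_smul
    (hX : ∀ a b y, X a (X b y) = X b (X a y) + ∑ c, sl2f a b c • X c y) (c d : Fin 3) (y : V) :
    ∑ a, ∑ b, sl2fLow c a b • ∑ e, sl2f d a e • X e (X b y) =
      (2 : ℂ) • X d (X c y) + (2 : ℂ) • ∑ e, sl2f c d e • X e y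
        - (2 * sl2Kinv d c) • zeroModeCasimir X y := by
  have hdiag : ∑ b, ∑ e, (2 * ((if c = e then 1 else 0) * (if d = b then 1 else 0) : ℂ)) •
      X e (X b y) = (2 : ℂ) • X c (X d y) := by
    simp
  have hcas : ∑ b, ∑ e, (2 * (sl2Kinv c d * sl2K e b)) • X e (X b y) =
      (2 * sl2Kinv d c) • zeroModeCasimir X y := by
    rw [Finset.sum_comm]
    simp [zeroModeCasimir, Finset.smul_sum, smul_smul, sl2Kinv_comm d c, mul_assoc]
  rw [sum_sum_smul_sum_smul]
  simp only [sum_sl2fLow_mul_sl2f, mul_sub, sub_smul, Finset.sum_sub_distrib]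
  rw [hdiag, hcas, hX c d, smul_add]

end ZeroModes

section AffineModes

variable {V : Type*} [AddCommGroup V] [Module ℂ V]

def IsAffineSl2Action (J : Fin 3 → ℤ → V →ₗ[ℂ] V) (k : ℂ) : Prop :=
  ∀ (a b : Fin 3) (n m : ℤ), J a n ∘ₗ J b m - J b m ∘ₗ J a n =
    (∑ c, sl2f a b c • J c (n + m)) +
      ((n : ℂ) * k * sl2Kinv a b * (if n + m = 0 then 1 else 0)) • LinearMap.id

variable {J : Fin 3 → ℤ → V →ₗ[ℂ] V} {k : ℂ}

theorem IsAffineSl2Action.apply_apply (hJ : IsAffineSl2Action J k)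
    (a b : Fin 3) (n m : ℤ) (x : V) :
    J a n (J b m x) = J b m (J a n x) + ∑ c, sl2f a b c • J c (n + m) x
      + ((n : ℂ) * k * sl2Kinv a b * (if n + m = 0 then 1 else 0)) • x := by
  have h := LinearMap.congr_fun (hJ a b n m) x
  simp only [LinearMap.sub_apply, LinearMap.comp_apply, LinearMap.add_apply,
    LinearMap.coe_sum, Finset.sum_apply, LinearMap.smul_apply, LinearMap.id_apply] at h
  rw [add_assoc, ← h]
  abel

theorem IsAffineSl2Action.zeroMode_apply_zeroMode (hJ : IsAffineSl2Action J k)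
    (a b : Fin 3) (y : V) :
    J a 0 (J b 0 y) = J b 0 (J a 0 y) + ∑ c, sl2f a b c • J c 0 y := by
  simpa using hJ.apply_apply a b 0 0 y

theorem IsAffineSl2Action.mode_one_apply_zeroMode (hJ : IsAffineSl2Action J k) {x : V}
    (hx : ∀ d, J d 1 x = 0) (d b : Fin 3) : J d 1 (J b 0 x) = 0 := by
  simp [hJ.apply_apply, hx]

theorem IsAffineSl2Action.mode_one_apply_mode_neg_one (hJ : IsAffineSl2Action J k) {x : V}
    (hx : ∀ d, J d 1 x = 0) (d a : Fin 3) :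
    J d 1 (J a (-1) x) = ∑ e, sl2f d a e • J e 0 x + (k * sl2Kinv d a) • x := by
  simp [hJ.apply_apply, hx]

end AffineModes

/-- In a highest-weight ŝl₂-module at level k (t = k+2) built over a horizontal
module with Casimir eigenvalue t²/2 - t, the operator T̂^c applied to any
horizontal state v yields a vector annihilated by every J^d_1. -/
theorem null_operator_gives_null_vector
    {V : Type*} [AddCommGroup V] [Module ℂ V]
    (J : Fin 3 → ℤ → V →ₗ[ℂ] V) (k t : ℂ) (ht : t = k + 2)
    (hcomm : ∀ (a b : Fin 3) (n m : ℤ), J a n ∘ₗ J b m - J b m ∘ₗ J a n =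
      (∑ c, sl2f a b c • J c (n + m)) +
        ((n : ℂ) * k * sl2Kinv a b * (if n + m = 0 then 1 else 0)) • LinearMap.id)
    (v : V) (hv : ∀ (a : Fin 3) (n : ℤ), 0 < n → J a n v = 0)
    (hC : (2 : ℂ) • (J 0 0) ((J 0 0) v) + (J 1 0) ((J 2 0) v) + (J 2 0) ((J 1 0) v)
        = (t ^ 2 / 2 - t) • v) :
    ∀ c d : Fin 3, J d 1 (nullOp J t c v) = 0 := by
  intro c d
  have hJ : IsAffineSl2Action J k := hcomm
  have hv1 : ∀ d, J d 1 v = 0 := fun d => hv d 1 one_pos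
  have hv2 : ∀ d b, J d 1 (J b 0 v) = 0 := hJ.mode_one_apply_zeroMode hv1
  have hv3 : ∀ d b, J d 1 (J b 0 (J c 0 v)) = 0 := hJ.mode_one_apply_zeroMode (hv2 · c)
  have hX := hJ.zeroMode_apply_zeroMode
  have hCv : zeroModeCasimir (J · 0) v = (t ^ 2 / 2 - t) • v := by
    rw [zeroModeCasimir_apply, hC]
  calc J d 1 (nullOp J t c v)
      = (2 : ℂ) • ∑ a, ∑ b, sl2K a b • (∑ e, sl2f d a e • J e 0 (J b 0 (J c 0 v))
            + (k * sl2Kinv d a) • J b 0 (J c 0 v))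
        - t • ∑ a, ∑ b, sl2fLow c a b • (∑ e, sl2f d a e • J e 0 (J b 0 v)
            + (k * sl2Kinv d a) • J b 0 v)
        - t ^ 2 • (∑ e, sl2f d c e • J e 0 v + (k * sl2Kinv d c) • v) := by
        simp [nullOp, map_sum, hJ.mode_one_apply_mode_neg_one, hv1, hv2, hv3]
    _ = (2 : ℂ) • ((2 : ℂ) • J d 0 (J c 0 v) + k • J d 0 (J c 0 v))
        - t • ((2 : ℂ) • J d 0 (J c 0 v) + (2 : ℂ) • ∑ e, sl2f c d e • J e 0 v
            - (2 * sl2Kinv d c) • ((t ^ 2 / 2 - t) • v) + k • ∑ e, sl2f c d e • J e 0 v)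
        - t ^ 2 • (-∑ e, sl2f c d e • J e 0 v + (k * sl2Kinv d c) • v) := by
        simp only [smul_add, Finset.sum_add_distrib, sum_sum_sl2K_smul_sl2Kinv_smul,
          sum_sum_sl2fLow_smul_sl2Kinv_smul, sum_sl2K_smul_sum_sl2f_smul hX,
          sum_sl2fLow_smul_sum_sl2f_smul hX, hCv, sl2f_swap c d, neg_smul, Finset.sum_neg_distrib]
    _ = 0 := by
        subst ht
        module
end

section
/- The null operators T̂^c := 2 K_{ab} J^a_{-1} J^b_0 J^c_0 - t f^c_{ab} J^a_{-1} J^b_0 - t² J^c_{-1} transform in the adjoint representation under the horizontal sl₂: [J^a_0, T̂^b] = f^{ab}_c T̂^c, as elements of (a suitable quotient of) U(ŝl₂). -/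
private lemma fin3_cases (a : Fin 3) : a = 0 ∨ a = 1 ∨ a = 2 := by fin_cases a <;> simp

set_option maxHeartbeats 2000000 in
/-- The null operators transform in the adjoint representation of the horizontal
sl₂: [J^a_0, T̂^b] = f^{ab}_c T̂^c. -/
theorem null_operator_adjoint
    {V : Type*} [AddCommGroup V] [Module ℂ V]
    (J : Fin 3 → ℤ → V →ₗ[ℂ] V) (k t : ℂ) (ht : t = k + 2)
    (hcomm : ∀ (a b : Fin 3) (n m : ℤ), J a n ∘ₗ J b m - J b m ∘ₗ J a n =
      (∑ c, sl2f a b c • J c (n + m)) +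
        ((n : ℂ) * k * sl2Kinv a b * (if n + m = 0 then 1 else 0)) • LinearMap.id) :
    ∀ a b : Fin 3,
      J a 0 ∘ₗ nullOp J t b - nullOp J t b ∘ₗ J a 0 = ∑ c, sl2f a b c • nullOp J t c := by
  intro a b
  have hswap : ∀ (x : Fin 3) (m : ℤ) (w : V),
      J a 0 (J x m w) = (∑ c, sl2f a x c • J c m w) + J x m (J a 0 w) := by
    intro x m w
    have h := LinearMap.congr_fun (hcomm a x 0 m) w
    simp only [LinearMap.sub_apply, LinearMap.add_apply, LinearMap.coe_comp, Function.comp_apply,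
      LinearMap.smul_apply, LinearMap.coe_sum, Finset.sum_apply, Int.cast_zero, zero_mul,
      zero_smul, add_zero, zero_add, LinearMap.id_coe, id_eq] at h
    exact eq_add_of_sub_eq h
  rcases fin3_cases a with rfl | rfl | rfl
  · rcases fin3_cases b with rfl | rfl | rfl <;>
    · ext v
      simp only [nullOp, sl2fLow, Fin.sum_univ_three, sl2f, sl2K, Fin.reduceEq, reduceIte,
      and_self, and_true, true_and, and_false, false_and, if_true, if_false, not_true, not_false_iff,
      mul_zero, zero_mul, mul_one, one_mul, add_zero, zero_add, zero_smul, smul_zero, neg_zero,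
      LinearMap.sub_apply, LinearMap.add_apply, LinearMap.smul_apply, LinearMap.coe_comp,
      Function.comp_apply, LinearMap.zero_apply, map_add, map_smul, map_sub, map_zero, smul_add, smul_sub]
      simp only [hswap 0 (-1), hswap 1 (-1), hswap 2 (-1), hswap 1 0, hswap 2 0, Fin.sum_univ_three, sl2f, sl2K, Fin.reduceEq, reduceIte,
      and_self, and_true, true_and, and_false, false_and, if_true, if_false, not_true, not_false_iff,
      mul_zero, zero_mul, mul_one, one_mul, add_zero, zero_add, zero_smul, smul_zero, neg_zero,
      LinearMap.sub_apply, LinearMap.add_apply, LinearMap.smul_apply, LinearMap.coe_comp,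
      Function.comp_apply, LinearMap.zero_apply, map_add, map_smul, map_sub, map_zero, smul_add, smul_sub]
      module
  · rcases fin3_cases b with rfl | rfl | rfl <;>
    · ext v
      simp only [nullOp, sl2fLow, Fin.sum_univ_three, sl2f, sl2K, Fin.reduceEq, reduceIte,
      and_self, and_true, true_and, and_false, false_and, if_true, if_false, not_true, not_false_iff,
      mul_zero, zero_mul, mul_one, one_mul, add_zero, zero_add, zero_smul, smul_zero, neg_zero,
      LinearMap.sub_apply, LinearMap.add_apply, LinearMap.smul_apply, LinearMap.coe_comp,
      Function.comp_apply, LinearMap.zero_apply, map_add, map_smul, map_sub, map_zero, smul_add, smul_sub]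
      simp only [hswap 0 (-1), hswap 1 (-1), hswap 2 (-1), hswap 0 0, hswap 2 0, Fin.sum_univ_three, sl2f, sl2K, Fin.reduceEq, reduceIte,
      and_self, and_true, true_and, and_false, false_and, if_true, if_false, not_true, not_false_iff,
      mul_zero, zero_mul, mul_one, one_mul, add_zero, zero_add, zero_smul, smul_zero, neg_zero,
      LinearMap.sub_apply, LinearMap.add_apply, LinearMap.smul_apply, LinearMap.coe_comp,
      Function.comp_apply, LinearMap.zero_apply, map_add, map_smul, map_sub, map_zero, smul_add, smul_sub]
      module
  · rcases fin3_cases b with rfl | rfl | rfl <;>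
    · ext v
      simp only [nullOp, sl2fLow, Fin.sum_univ_three, sl2f, sl2K, Fin.reduceEq, reduceIte,
      and_self, and_true, true_and, and_false, false_and, if_true, if_false, not_true, not_false_iff,
      mul_zero, zero_mul, mul_one, one_mul, add_zero, zero_add, zero_smul, smul_zero, neg_zero,
      LinearMap.sub_apply, LinearMap.add_apply, LinearMap.smul_apply, LinearMap.coe_comp,
      Function.comp_apply, LinearMap.zero_apply, map_add, map_smul, map_sub, map_zero, smul_add, smul_sub]
      simp only [hswap 0 (-1), hswap 1 (-1), hswap 2 (-1), hswap 0 0, hswap 1 0, Fin.sum_univ_three, sl2f, sl2K, Fin.reduceEq, reduceIte,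
      and_self, and_true, true_and, and_false, false_and, if_true, if_false, not_true, not_false_iff,
      mul_zero, zero_mul, mul_one, one_mul, add_zero, zero_add, zero_smul, smul_zero, neg_zero,
      LinearMap.sub_apply, LinearMap.add_apply, LinearMap.smul_apply, LinearMap.coe_comp,
      Function.comp_apply, LinearMap.zero_apply, map_add, map_smul, map_sub, map_zero, smul_add, smul_sub]
      module
end
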